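/- arXiv:2311.15794 — 2 statements merged into one kernel-verified Lean document; each statement's English description precedes it below -/
import Mathlib

section
/- Let A be an m × m matrix over a commutative ring and 1 ≤ k ≤ m. Then (1/k!) Σ δ^{i₁ i₂ ⋯ i_k}_{j₁ j₂ ⋯ j_k} A^{j₁}_{i₁} ⋯ A^{j_k}_{i_k} = Σ_{S ⊆ {1,…,m}, |S| = k} det(A_{S,S}), where the sum on the left runs over all k-tuples (i₁,…,i_k) and (j₁,…,j_k) of indices in {1,…,m}; that is, the generalized Kronecker-delta expression (2.2) of the paper equals the sum of all k × k principal minors of A. -/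
/-!
Expanding `det A_{i,i}` multilinearly in its rows, where row `a` is `∑ₓ A_{i_a x} (δ^{i_b}_x)_b`,
produces exactly `∑_j δ^{i}_{j} ∏ₐ A_{i_a j_a}`, so the left-hand side is `(1/k!) ∑_i det A_{i,i}`.
A tuple `i` with a repeated index gives two equal rows, hence determinant zero; an injective tuple
with image `S` gives `A_{S,S}` with rows and columns reindexed by the same bijection, hence the
principal minor of `S`; and every `k`-subset `S` is the image of exactly `k!` tuples.
-/


open Finset

/-- The generalized Kronecker delta `δ^{i₁ ⋯ i_k}_{j₁ ⋯ j_k}`: the determinant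
of the `k × k` matrix whose `(a, b)` entry is the ordinary Kronecker delta
`δ^{i_b}_{j_a}`. -/
def genKroneckerDelta {m k : ℕ} (i j : Fin k → Fin m) : ℝ :=
  (Matrix.of fun a b : Fin k => if i b = j a then (1 : ℝ) else 0).det

/-- The principal minor of an `m × m` real matrix `A` corresponding to a
subset `S` of the indices: the determinant of the submatrix of `A` whose rows
and columns are indexed by `S`. -/
noncomputable def principalMinor {m : ℕ} (A : Matrix (Fin m) (Fin m) ℝ)
    (S : Finset (Fin m)) : ℝ :=
  (A.submatrix (fun i : {x // x ∈ S} => (i : Fin m))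
    (fun j : {x // x ∈ S} => (j : Fin m))).det

open Function

section

variable {α : Type*} [DecidableEq α] {k : ℕ}

theorem exists_equiv_of_image_univ_eq {i : Fin k → α} (hi : Injective i) {S : Finset α}
    (hS : univ.image i = S) : ∃ e : Fin k ≃ S, ∀ a, (e a : α) = i a :=
  ⟨(Equiv.ofInjective i hi).trans (Equiv.subtypeEquivRight fun x => by simp [← hS]),
    fun _ => rfl⟩

theorem card_image_univ_eq_iff_injective {i : Fin k → α} :
    #(univ.image i) = k ↔ Injective i := by
  rw [← Set.injOn_univ, ← coe_univ, ← card_image_iff, card_univ, Fintype.card_fin]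

theorem card_filter_image_univ_eq_factorial [Fintype α] {S : Finset α} (hcard : #S = k) :
    #{i : Fin k → α | univ.image i = S} = k.factorial := by
  have hequiv : #(univ : Finset (Fin k ≃ S)) = k.factorial := by
    rw [card_univ, Fintype.card_equiv (Fintype.equivFinOfCardEq (by simpa using hcard)).symm,
      Fintype.card_fin]
  rw [← hequiv]
  symm
  refine card_bij (fun e _ a => (e a : α)) (fun e _ => ?_) (fun e₁ _ e₂ _ h => ?_) fun i hi => ?_
  · simp only [mem_filter, mem_univ, true_and]
    ext x
    simp only [mem_image, mem_univ, true_and]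
    exact ⟨fun ⟨a, ha⟩ => ha ▸ (e a).2, fun hx => ⟨e.symm ⟨x, hx⟩, by simp⟩⟩
  · ext a; exact congrFun h a
  · simp only [mem_filter, mem_univ, true_and] at hi
    obtain ⟨e, he⟩ :=
      exists_equiv_of_image_univ_eq (card_image_univ_eq_iff_injective.mp (hi ▸ hcard)) hi
    exact ⟨e, mem_univ _, funext he⟩

end

namespace Matrix

variable {n R : Type*} [CommRing R]

theorem det_submatrix_self_eq_zero_of_not_injective (A : Matrix n n R) {i : Fin k → n}
    (hi : ¬Injective i) : (A.submatrix i i).det = 0 := by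
  obtain ⟨a, b, hab, hne⟩ := not_injective_iff.mp hi
  exact det_zero_of_row_eq hne (funext fun c => by simp [hab])

theorem det_submatrix_self_eq_of_image_eq [DecidableEq n] (A : Matrix n n R) {i : Fin k → n}
    (hi : Injective i) {S : Finset n} (hS : univ.image i = S) :
    (A.submatrix i i).det = (A.submatrix (Subtype.val : S → n) Subtype.val).det := by
  obtain ⟨e, he⟩ := exists_equiv_of_image_univ_eq hi hS
  rw [← det_submatrix_equiv_self e, submatrix_submatrix]
  congr <;> exact funext fun a => (he a).symm

theorem sum_det_submatrix_self [Fintype n] [DecidableEq n] (A : Matrix n n R) :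
    ∑ i : Fin k → n, (A.submatrix i i).det =
      k.factorial •
        ∑ S ∈ powersetCard k univ, (A.submatrix (Subtype.val : S → n) Subtype.val).det := by
  calc ∑ i : Fin k → n, (A.submatrix i i).det
      = ∑ S : Finset n, ∑ i with univ.image i = S, (A.submatrix i i).det :=
        (sum_fiberwise univ (fun i : Fin k → n => univ.image i) _).symm
    _ = ∑ S : Finset n,
          if #S = k then k.factorial • (A.submatrix (Subtype.val : S → n) Subtype.val).det
          else 0 := by
        refine sum_congr rfl fun S _ => ?_
        split_ifs with hcard
        · rw [← card_filter_image_univ_eq_factorial hcard, ← sum_const]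
          refine sum_congr rfl fun i hi => ?_
          rw [mem_filter] at hi
          exact det_submatrix_self_eq_of_image_eq A
            (card_image_univ_eq_iff_injective.mp (hi.2 ▸ hcard)) hi.2
        · refine sum_eq_zero fun i hi => det_submatrix_self_eq_zero_of_not_injective A ?_
          rw [mem_filter] at hi
          exact fun hinj => hcard (hi.2 ▸ card_image_univ_eq_iff_injective.mpr hinj)
    _ = _ := by rw [← sum_filter, ← smul_sum, powersetCard_eq_filter, powerset_univ]

end Matrix

theorem det_submatrix_self_eq_sum_genKroneckerDelta {m k : ℕ} (A : Matrix (Fin m) (Fin m) ℝ)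
    (i : Fin k → Fin m) :
    (A.submatrix i i).det = ∑ j : Fin k → Fin m, genKroneckerDelta i j * ∏ a, A (i a) (j a) := by
  have hrows : A.submatrix i i =
      Matrix.of fun a => ∑ x, A (i a) x • fun b => if i b = x then (1 : ℝ) else 0 := by
    ext a b
    simp [Finset.sum_apply]
  rw [hrows]
  refine (Matrix.detRowAlternating.toMultilinearMap.map_sum
    fun a x => A (i a) x • fun b => if i b = x then (1 : ℝ) else 0).trans ?_
  refine sum_congr rfl fun j _ => ?_
  rw [AlternatingMap.coe_multilinearMap, AlternatingMap.map_smul_univ, smul_eq_mul, mul_comm]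
  rfl

theorem genKroneckerDelta_sum_eq_sum_principal_minors_general {m k : ℕ}
    (A : Matrix (Fin m) (Fin m) ℝ) :
    (k.factorial : ℝ)⁻¹ *
        ∑ i : Fin k → Fin m, ∑ j : Fin k → Fin m,
          genKroneckerDelta i j * ∏ a : Fin k, A (i a) (j a) =
      ∑ S ∈ (Finset.univ : Finset (Fin m)).powersetCard k, principalMinor A S := by
  simp_rw [← det_submatrix_self_eq_sum_genKroneckerDelta, Matrix.sum_det_submatrix_self,
    nsmul_eq_mul]
  rw [inv_mul_cancel_left₀ (by positivity)]
  rfl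

/-- For an `m × m` matrix `A` and `1 ≤ k ≤ m`,
`(1/k!) Σ δ^{i₁ ⋯ i_k}_{j₁ ⋯ j_k} A^{j₁}_{i₁} ⋯ A^{j_k}_{i_k}` equals the sum
of all `k × k` principal minors of `A`, where the sum on the left runs over all
`k`-tuples `(i₁, …, i_k)` and `(j₁, …, j_k)` of indices in `{1, …, m}`. -/
theorem genKroneckerDelta_sum_eq_sum_principal_minors {m k : ℕ}
    (hk1 : 1 ≤ k) (hk2 : k ≤ m) (A : Matrix (Fin m) (Fin m) ℝ) :
    (k.factorial : ℝ)⁻¹ *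
        ∑ i : Fin k → Fin m, ∑ j : Fin k → Fin m,
          genKroneckerDelta i j * ∏ a : Fin k, A (i a) (j a) =
      ∑ S ∈ (Finset.univ : Finset (Fin m)).powersetCard k, principalMinor A S :=
  genKroneckerDelta_sum_eq_sum_principal_minors_general A
end

section
/- Let A and B be real m × m matrices and 0 ≤ k ≤ m − 1. Then the first variation of σ_{k+1} at A in the direction B is given by the Newton transformation: d/dt σ_{k+1}(A + tB) |_{t=0} = tr(T_k(A) · B), where σ_{k+1}(M) denotes the sum of all (k+1) × (k+1) principal minors of M and T_k(A) = Σ_{i=0}^{k} (−1)^i σ_{k−i}(A) A^i. -/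
open Finset

/-- `matSigma k A` is the sum of all `k × k` principal minors of the `m × m`
matrix `A`, with the convention `matSigma 0 A = 1`. -/
noncomputable def matSigma {m : ℕ} (k : ℕ) (A : Matrix (Fin m) (Fin m) ℝ) : ℝ :=
  ∑ S ∈ (Finset.univ : Finset (Fin m)).powersetCard k,
    (A.submatrix (fun i : {x // x ∈ S} => (i : Fin m))
      (fun j : {x // x ∈ S} => (j : Fin m))).det

/-- The `k`-th Newton transformation of an `m × m` matrix `A`:
`T_k(A) = Σ_{i=0}^{k} (−1)^i σ_{k−i}(A) Aⁱ`. -/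
noncomputable def newtonTransform {m : ℕ} (k : ℕ) (A : Matrix (Fin m) (Fin m) ℝ) :
    Matrix (Fin m) (Fin m) ℝ :=
  ∑ i ∈ Finset.range (k + 1), ((-1 : ℝ) ^ i * matSigma (k - i) A) • A ^ i

/-!
The coefficient of `X ^ j` in `det (1 + X • A)` is `σ_j(A)`. Expanding the determinant
multilinearly in its rows, the part of `det (P + t • N)` linear in `t` is
`∑ i, det (P with row i replaced by N i) = tr (adj P * N)` (Jacobi's formula). With
`P = 1 + X • A` and `N = X • B`, the derivative is therefore the coefficient of `X ^ k` in
`tr (adj (1 + X • A) * B)`. Comparing coefficients in `(1 + X • A) * adj (1 + X • A) =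
det (1 + X • A) • 1` shows that the coefficients `C_i` of `adj (1 + X • A)` satisfy `C_0 = 1`
and `C_(i+1) = σ_(i+1)(A) • 1 - A * C_i`, the recursion of the Newton transformations.
-/

open Polynomial

namespace Matrix

theorem of_piecewise_singleton_row {n R : Type*} [DecidableEq n] (M N : Matrix n n R) (i : n) :
    of (({i} : Finset n).piecewise N.row M.row) = M.updateRow i (N i) := by
  rw [Finset.piecewise_singleton]
  rfl

variable {n R : Type*} [Fintype n] [DecidableEq n] [CommRing R]

theorem det_add_smul_eq_sum_piecewise (M N : Matrix n n R) (r : R) :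
    det (M + r • N) = ∑ s : Finset n, r ^ s.card * det (of (s.piecewise N.row M.row)) := by
  rw [add_comm]
  change detRowAlternating ((r • N).row + M.row) = _
  rw [AlternatingMap.map_add_univ]
  refine Finset.sum_congr rfl fun s _ => ?_
  have hrows : s.piecewise (r • N).row M.row =
      fun i => (if i ∈ s then r else 1) • s.piecewise N.row M.row i := by
    funext i j
    by_cases hi : i ∈ s <;> simp [hi]
  rw [hrows, AlternatingMap.map_smul_univ, Finset.prod_ite_mem, Finset.univ_inter,
    Finset.prod_const, smul_eq_mul]
  rfl

theorem det_updateRow_eq_sum_mul_adjugate (M : Matrix n n R) (i : n) (v : n → R) :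
    det (M.updateRow i v) = ∑ j, v j * adjugate M j i := by
  rw [← cramer_transpose_apply, cramer_eq_adjugate_mulVec, ← adjugate_transpose, mulVec,
    dotProduct]
  simp only [transpose_apply, mul_comm]

theorem sum_det_updateRow_eq_trace_adjugate_mul (M N : Matrix n n R) :
    ∑ i, det (M.updateRow i (N i)) = trace (adjugate M * N) := by
  simp only [det_updateRow_eq_sum_mul_adjugate, trace, diag_apply, mul_apply, mul_comm (N _ _)]
  exact Finset.sum_comm

theorem coeff_trace_eq_trace_coeff_matPolyEquiv (M : Matrix n n R[X]) (k : ℕ) :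
    (trace M).coeff k = trace ((matPolyEquiv M).coeff k) := by
  simp only [trace, diag_apply, finsetSum_coeff, matPolyEquiv_coeff_apply]

end Matrix

theorem hasDerivAt_sum_pow_card_mul {n 𝕜 : Type*} [Fintype n] [DecidableEq n]
    [NontriviallyNormedField 𝕜] (c : Finset n → 𝕜) :
    HasDerivAt (fun t : 𝕜 => ∑ s : Finset n, t ^ s.card * c s) (∑ i, c {i}) 0 := by
  refine (HasDerivAt.fun_sum fun s _ =>
    (hasDerivAt_pow s.card (0 : 𝕜)).mul_const (c s)).congr_deriv ?_
  have hterm : ∀ s : Finset n, ((s.card : 𝕜) * 0 ^ (s.card - 1)) * c s =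
      if s.card = 1 then c s else 0 := by
    intro s
    rcases Nat.lt_trichotomy s.card 1 with h | h | h
    · simp [Nat.lt_one_iff.mp h]
    · simp [h]
    · simp [h.ne', zero_pow (Nat.sub_ne_zero_of_lt h)]
  rw [Finset.sum_congr rfl fun s _ => hterm s, ← Finset.sum_filter, ← Finset.powerset_univ,
    ← Finset.powersetCard_eq_filter, Finset.powersetCard_one, Finset.sum_map]
  rfl

theorem Matrix.hasDerivAt_linearMap_det_add_smul {n 𝕜 R : Type*} [Fintype n] [DecidableEq n]
    [NontriviallyNormedField 𝕜] [CommRing R] [Algebra 𝕜 R] (φ : R →ₗ[𝕜] 𝕜)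
    (M N : Matrix n n R) :
    HasDerivAt (fun t : 𝕜 => φ (det (M + t • N))) (φ (trace (adjugate M * N))) 0 := by
  set c : Finset n → 𝕜 := fun s => φ (det (of (s.piecewise N.row M.row)))
  have hexpand :
      (fun t : 𝕜 => φ (det (M + t • N))) = fun t => ∑ s : Finset n, t ^ s.card * c s := by
    funext t
    rw [← algebraMap_smul R t N, det_add_smul_eq_sum_piecewise, map_sum]
    simp only [← map_pow, ← Algebra.smul_def, map_smul, smul_eq_mul, c]
  rw [hexpand, ← sum_det_updateRow_eq_trace_adjugate_mul, map_sum]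
  simpa only [c, of_piecewise_singleton_row] using hasDerivAt_sum_pow_card_mul c

open Matrix

section Newton

variable {m : ℕ}

theorem matSigma_eq_coeff_det_one_add_X_smul (j : ℕ) (A : Matrix (Fin m) (Fin m) ℝ) :
    matSigma j A = (det (1 + (X : ℝ[X]) • A.map C)).coeff j :=
  (coeff_det_one_add_X_smul_eq_sum_minors A j).symm

theorem matSigma_zero (A : Matrix (Fin m) (Fin m) ℝ) : matSigma 0 A = 1 := by
  simp [matSigma]

theorem newtonTransform_zero (A : Matrix (Fin m) (Fin m) ℝ) : newtonTransform 0 A = 1 := by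
  simp [newtonTransform, matSigma_zero]

theorem newtonTransform_succ (k : ℕ) (A : Matrix (Fin m) (Fin m) ℝ) :
    newtonTransform (k + 1) A = matSigma (k + 1) A • 1 - A * newtonTransform k A := by
  rw [newtonTransform, Finset.sum_range_succ', newtonTransform, Finset.mul_sum,
    sub_eq_neg_add, ← Finset.sum_neg_distrib]
  congr 1
  · refine Finset.sum_congr rfl fun i _ => ?_
    rw [Nat.add_sub_add_right, pow_succ, pow_succ', mul_smul_comm, ← neg_smul]
    congr 1
    ring
  · simp

theorem coeff_matPolyEquiv_adjugate_one_add_X_smul (A : Matrix (Fin m) (Fin m) ℝ) (i : ℕ) :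
    (matPolyEquiv (adjugate (1 + (X : ℝ[X]) • A.map C))).coeff i = newtonTransform i A := by
  set Q := matPolyEquiv (adjugate (1 + (X : ℝ[X]) • A.map C))
  have hmul : Q + X * (C A * Q) =
      (det (1 + (X : ℝ[X]) • A.map C)).map (algebraMap ℝ (Matrix (Fin m) (Fin m) ℝ)) := by
    rw [← matPolyEquiv_smul_one, ← mul_adjugate, map_mul]
    simp only [Q, map_add, map_one, matPolyEquiv_map_smul, matPolyEquiv_map_C, map_X, add_mul,
      one_mul, mul_assoc]
  induction i with
  | zero =>
    have h0 := congrArg (coeff · 0) hmul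
    simpa [newtonTransform_zero, ← matSigma_eq_coeff_det_one_add_X_smul, matSigma_zero] using h0
  | succ i ih =>
    have hsucc := congrArg (coeff · (i + 1)) hmul
    simp only [coeff_add, coeff_X_mul, coeff_C_mul, coeff_map, ih,
      ← matSigma_eq_coeff_det_one_add_X_smul, Algebra.algebraMap_eq_smul_one] at hsucc
    rw [newtonTransform_succ, ← hsucc, add_sub_cancel_right]

theorem coeff_trace_adjugate_one_add_X_smul_mul (A B : Matrix (Fin m) (Fin m) ℝ) (k : ℕ) :
    (trace (adjugate (1 + (X : ℝ[X]) • A.map C) * B.map C)).coeff k =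
      trace (newtonTransform k A * B) := by
  rw [coeff_trace_eq_trace_coeff_matPolyEquiv, map_mul, matPolyEquiv_map_C, coeff_mul_C,
    coeff_matPolyEquiv_adjugate_one_add_X_smul]

end Newton

theorem deriv_matSigma_eq_trace_newtonTransform_mul_general {m k : ℕ}
    (A B : Matrix (Fin m) (Fin m) ℝ) :
    deriv (fun t : ℝ => matSigma (k + 1) (A + t • B)) 0 =
      Matrix.trace (newtonTransform k A * B) := by
  set P : Matrix (Fin m) (Fin m) ℝ[X] := 1 + (X : ℝ[X]) • A.map C
  have hsigma : (fun t : ℝ => matSigma (k + 1) (A + t • B)) =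
      fun t => lcoeff ℝ (k + 1) (det (P + t • ((X : ℝ[X]) • B.map C))) := by
    funext t
    rw [matSigma_eq_coeff_det_one_add_X_smul, lcoeff_apply]
    congr 2
    ext i j : 1
    simp only [P, Matrix.add_apply, Matrix.smul_apply, map_apply, smul_eq_mul, map_add, map_mul,
      X_mul_C, smul_eq_C_mul]
    ring
  rw [hsigma, (hasDerivAt_linearMap_det_add_smul _ P _).deriv, lcoeff_apply, Matrix.mul_smul,
    trace_smul, smul_eq_mul, coeff_X_mul, coeff_trace_adjugate_one_add_X_smul_mul]

/-- For real `m × m` matrices `A`, `B` and `0 ≤ k ≤ m − 1`, the first variation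
of `σ_{k+1}` at `A` in the direction `B` is given by the Newton transformation:
`d/dt σ_{k+1}(A + tB) |_{t=0} = tr(T_k(A) · B)`. -/
theorem deriv_matSigma_eq_trace_newtonTransform_mul {m k : ℕ} (hk : k ≤ m - 1)
    (A B : Matrix (Fin m) (Fin m) ℝ) :
    deriv (fun t : ℝ => matSigma (k + 1) (A + t • B)) 0 =
      Matrix.trace (newtonTransform k A * B) :=
  deriv_matSigma_eq_trace_newtonTransform_mul_general A B
end
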